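/- Let A be a finite-dimensional symmetric k-algebra with nondegenerate form (·,·), and a filtration A = I_0 ⊋ I_1 ⊋ ... ⊋ I_N = 0 by two-sided ideals with I_i I_j ⊆ I_{i+j}, such that (·,·) induces a nondegenerate pairing between A/I_j and I_{N-j} for all j. Let 𝔠 = 𝔅/𝔍 be the quotient algebra whose (i,j)-entry is A/I_{N-(i-j)} if i−N < j ≤ i, I_{j-i} if j > i, and zero if j ≤ i−N. Define a bilinear form on 𝔠 by (a_{i,j}, b_{k,l}) := δ_{j,k} δ_{i,l} (a, b). Then this form is symmetric, associative, and nondegenerate, so 𝔠 is a symmetric algebra (in the locally unital sense). -/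
import Mathlib


open scoped BigOperators

section

variable {k A : Type*} [Field k] [Ring A] [Algebra k A]

/-- The `(i,j)` entry constraint of the algebra `𝔅`: all of `A` on and below the
diagonal, `I_{j-i}` above it. -/
noncomputable def entB (I : ℕ → Submodule k A) (i j : ℤ) : Submodule k A :=
  if j ≤ i then ⊤ else I (j - i).toNat

/-- The `(i,j)` entry constraint of the ideal `𝔍`: everything for `j ≤ i - N`,
`I_{N-(i-j)}` for `i - N < j ≤ i`, and `0` above the diagonal.  (The quotient
`𝔠 = 𝔅/𝔍` thus has entries `A/I_{N-(i-j)}` for `i - N < j ≤ i` and `I_{j-i}`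
for `j > i`.) -/
noncomputable def entJ (I : ℕ → Submodule k A) (N : ℕ) (i j : ℤ) : Submodule k A :=
  if j ≤ i - N then ⊤ else if j ≤ i then I ((N : ℤ) - (i - j)).toNat else ⊥

/-- Membership in `𝔅` for a finitely supported `ℤ×ℤ` matrix. -/
def memB (I : ℕ → Submodule k A) (M : ℤ → ℤ → A) : Prop :=
  {p : ℤ × ℤ | M p.1 p.2 ≠ 0}.Finite ∧ ∀ i j, M i j ∈ entB I i j

/-- Membership in `𝔍`. -/
def memJ (I : ℕ → Submodule k A) (N : ℕ) (M : ℤ → ℤ → A) : Prop :=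
  {p : ℤ × ℤ | M p.1 p.2 ≠ 0}.Finite ∧ ∀ i j, M i j ∈ entJ I N i j

/-- Multiplication of finitely supported `ℤ×ℤ` matrices. -/
noncomputable def matMul (M N : ℤ → ℤ → A) : ℤ → ℤ → A :=
  fun i j => ∑ᶠ l : ℤ, M i l * N l j

/-- The bilinear form on `𝔠`: `(a_{i,j}, b_{l,m}) = δ_{j,l} δ_{i,m} (a,b)`, i.e.
`Φ(M, M') = ∑_{i,j} (M_{i,j}, M'_{j,i})`. -/
noncomputable def matForm (B : A →ₗ[k] A →ₗ[k] k) (M M' : ℤ → ℤ → A) : k :=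
  ∑ᶠ i : ℤ, ∑ᶠ j : ℤ, B (M i j) (M' j i)

end


section auxProofs

variable {k A : Type*} [Field k] [Ring A] [Algebra k A]

/-- Auxiliary: a double finsum whose nonzero terms land in a finset equals the
corresponding finite double sum. -/
lemma finsum2_eq_sum {R : Type*} [AddCommMonoid R] (f : ℤ → ℤ → R) (s : Finset ℤ)
    (h : ∀ i j, f i j ≠ 0 → i ∈ s ∧ j ∈ s) :
    (∑ᶠ i, ∑ᶠ j, f i j) = ∑ i ∈ s, ∑ j ∈ s, f i j := by
  have hin : ∀ i, (∑ᶠ j, f i j) = ∑ j ∈ s, f i j := fun i =>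
    finsum_eq_finset_sum_of_support_subset _ (fun j hj => (h i j hj).2)
  rw [finsum_congr hin]
  refine finsum_eq_finset_sum_of_support_subset _ (fun i hi => ?_)
  simp only [Function.mem_support] at hi
  obtain ⟨j, _, hj⟩ := Finset.exists_ne_zero_of_sum_ne_zero hi
  exact (h i j hj).1

/-- A single-entry matrix. -/
noncomputable def sng (p q : ℤ) (v : A) : ℤ → ℤ → A :=
  fun a b => if a = p ∧ b = q then v else 0

lemma sng_memB (I : ℕ → Submodule k A) (p q : ℤ) (v : A) (hv : v ∈ entB I p q) :
    memB I (sng p q v) := by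
  constructor
  · refine Set.Finite.subset (Set.finite_singleton (p, q)) (fun x hx => ?_)
    by_contra hne
    apply hx
    simp only [sng]
    rw [if_neg]
    intro ⟨h1, h2⟩
    exact hne (by rw [Set.mem_singleton_iff, Prod.ext_iff]; exact ⟨h1, h2⟩)
  · intro i j
    unfold sng
    split
    · next hij => rw [hij.1, hij.2]; exact hv
    · exact Submodule.zero_mem _

lemma matForm_sng (B : A →ₗ[k] A →ₗ[k] k) (M : ℤ → ℤ → A) (j i : ℤ) (y : A) :
    matForm B M (sng j i y) = B (M i j) y := by
  unfold matForm
  have hinner : ∀ a, (∑ᶠ b, B (M a b) (sng j i y b a)) =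
      if a = i then B (M a j) y else 0 := by
    intro a
    by_cases ha : a = i
    · subst ha
      rw [if_pos rfl]
      rw [finsum_eq_single _ j]
      · simp [sng]
      · intro b hb
        have : sng j a y b a = 0 := by
          simp only [sng]; rw [if_neg]; intro ⟨h1, _⟩; exact hb h1
        rw [this, map_zero]
    · rw [if_neg ha]
      have : ∀ b, B (M a b) (sng j i y b a) = 0 := by
        intro b
        have : sng j i y b a = 0 := by
          simp only [sng]; rw [if_neg]; intro ⟨_, h2⟩; exact ha h2
        rw [this, map_zero]
      rw [finsum_congr this, finsum_zero]
  rw [finsum_congr hinner, finsum_eq_single _ i (fun a ha => if_neg ha), if_pos rfl]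

/-- The coordinates appearing in a finite set of pairs. -/
noncomputable def coords {S : Set (ℤ × ℤ)} (h : S.Finite) : Finset ℤ :=
  h.toFinset.image Prod.fst ∪ h.toFinset.image Prod.snd

lemma mem_coords {S : Set (ℤ × ℤ)} (h : S.Finite) {p : ℤ × ℤ} (hp : p ∈ S) :
    p.1 ∈ coords h ∧ p.2 ∈ coords h := by
  constructor
  · exact Finset.mem_union_left _ (Finset.mem_image_of_mem _ (h.mem_toFinset.2 hp))
  · exact Finset.mem_union_right _ (Finset.mem_image_of_mem _ (h.mem_toFinset.2 hp))

/-- If all summands vanish, the form vanishes. -/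
lemma matForm_eq_zero (B : A →ₗ[k] A →ₗ[k] k) (M M' : ℤ → ℤ → A)
    (h : ∀ i j, B (M i j) (M' j i) = 0) : matForm B M M' = 0 := by
  unfold matForm
  have : ∀ i, (∑ᶠ j, B (M i j) (M' j i)) = 0 := by
    intro i; rw [finsum_congr (h i), finsum_zero]
  rw [finsum_congr this, finsum_zero]

end auxProofs

/-- Let `A` be a finite-dimensional symmetric `k`-algebra with nondegenerate
symmetric associative form `B`, and `A = I_0 ⊋ ... ⊋ I_N = 0` a filtration by two-sided
ideals with `I_i I_j ⊆ I_{i+j}` such that `B` induces a nondegenerate pairing between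
`A/I_j` and `I_{N-j}` for every `j`.  Then the form
`(a_{i,j}, b_{l,m}) = δ_{j,l} δ_{i,m} (a,b)` on `𝔠 = 𝔅/𝔍` is symmetric, associative and
nondegenerate (it descends to `𝔠` and an element of `𝔅` orthogonal to everything lies in
`𝔍`), so `𝔠` is a symmetric algebra. -/
theorem statement12 {k A : Type*} [Field k] [Ring A] [Algebra k A]
    [FiniteDimensional k A]
    (B : A →ₗ[k] A →ₗ[k] k)
    (hsymm : ∀ a b : A, B a b = B b a)
    (hassoc : ∀ a b c : A, B (a * b) c = B a (b * c))
    (hnd : ∀ a : A, (∀ b : A, B a b = 0) → a = 0)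
    (N : ℕ) (hN : 0 < N)
    (I : ℕ → Submodule k A)
    (hI0 : I 0 = ⊤) (hIN : ∀ m, N ≤ m → I m = ⊥)
    (hstrict : ∀ m < N, I (m + 1) < I m)
    (htwo : ∀ (m : ℕ) (a x : A), x ∈ I m → a * x ∈ I m ∧ x * a ∈ I m)
    (hImul : ∀ (i j : ℕ) (x y : A), x ∈ I i → y ∈ I j → x * y ∈ I (i + j))
    (hpair : ∀ j ≤ N,
      (∀ x ∈ I j, ∀ y ∈ I (N - j), B x y = 0) ∧
      (∀ a : A, (∀ y ∈ I (N - j), B a y = 0) → a ∈ I j) ∧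
      (∀ y ∈ I (N - j), (∀ a : A, B a y = 0) → y = 0)) :
    (∀ M M', memB I M → memB I M' → matForm B M M' = matForm B M' M) ∧
    (∀ M M', memJ I N M → memB I M' → matForm B M M' = 0) ∧
    (∀ M M', memB I M → memJ I N M' → matForm B M M' = 0) ∧
    (∀ M M' M'', memB I M → memB I M' → memB I M'' →
        matForm B (matMul M M') M'' = matForm B M (matMul M' M'')) ∧
    (∀ M, memB I M → (∀ M', memB I M' → matForm B M M' = 0) → memJ I N M) := by
  refine ⟨?_, ?_, ?_, ?_, ?_⟩
  · -- symmetry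
    intro M M' hM hM'
    unfold matForm
    set s : Finset ℤ := coords hM.1 ∪ coords hM'.1 with hs
    have h1 : ∀ i j, B (M i j) (M' j i) ≠ 0 → i ∈ s ∧ j ∈ s := by
      intro i j hne
      have hMij : M i j ≠ 0 := fun h => hne (by rw [h, map_zero, LinearMap.zero_apply])
      have := mem_coords hM.1 (p := (i, j)) hMij
      exact ⟨Finset.mem_union_left _ this.1, Finset.mem_union_left _ this.2⟩
    have h2 : ∀ i j, B (M' i j) (M j i) ≠ 0 → i ∈ s ∧ j ∈ s := by
      intro i j hne
      have hMij : M' i j ≠ 0 := fun h => hne (by rw [h, map_zero, LinearMap.zero_apply])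
      have := mem_coords hM'.1 (p := (i, j)) hMij
      exact ⟨Finset.mem_union_right _ this.1, Finset.mem_union_right _ this.2⟩
    rw [finsum2_eq_sum _ s h1, finsum2_eq_sum _ s h2, Finset.sum_comm]
    exact Finset.sum_congr rfl (fun j _ => Finset.sum_congr rfl (fun i _ => hsymm _ _))
  · -- 𝔍 ⊥ 𝔅
    intro M M' hM hM'
    refine matForm_eq_zero B M M' (fun i j => ?_)
    have hMij := hM.2 i j
    have hM'ji := hM'.2 j i
    unfold entJ at hMij
    unfold entB at hM'ji
    rcases le_or_gt j (i - N) with hle | hgt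
    · rw [if_neg (by omega : ¬ i ≤ j)] at hM'ji
      rw [hIN (i - j).toNat (by omega)] at hM'ji
      rw [(Submodule.mem_bot k).1 hM'ji, map_zero]
    · rw [if_neg (by omega : ¬ j ≤ i - (N:ℤ))] at hMij
      rcases le_or_gt j i with hji | hji
      · rw [if_pos hji] at hMij
        rcases eq_or_lt_of_le hji with heq | hlt
        · subst heq
          rw [hIN _ (by omega)] at hMij
          rw [(Submodule.mem_bot k).1 hMij, map_zero, LinearMap.zero_apply]
        · rw [if_neg (by omega : ¬ i ≤ j)] at hM'ji
          set d : ℕ := (i - j).toNat with hd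
          have hdN : d < N := by omega
          have h1 : ((N:ℤ) - (i - j)).toNat = N - d := by omega
          have h2 : N - (N - d) = d := by omega
          rw [h1] at hMij
          refine (hpair (N - d) (by omega)).1 _ hMij _ ?_
          rw [h2]; exact hM'ji
      · rw [if_neg (by omega : ¬ j ≤ i)] at hMij
        rw [(Submodule.mem_bot k).1 hMij, map_zero, LinearMap.zero_apply]
  · -- 𝔅 ⊥ 𝔍
    intro M M' hM hM'
    refine matForm_eq_zero B M M' (fun i j => ?_)
    have hMij := hM.2 i j
    have hM'ji := hM'.2 j i
    unfold entB at hMij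
    unfold entJ at hM'ji
    rcases le_or_gt i (j - N) with hle | hgt
    · rw [if_neg (by omega : ¬ j ≤ i)] at hMij
      rw [hIN (j - i).toNat (by omega)] at hMij
      rw [(Submodule.mem_bot k).1 hMij, map_zero, LinearMap.zero_apply]
    · rw [if_neg (by omega : ¬ i ≤ j - (N:ℤ))] at hM'ji
      rcases le_or_gt i j with hij | hij
      · rw [if_pos hij] at hM'ji
        rcases eq_or_lt_of_le hij with heq | hlt
        · subst heq
          rw [hIN _ (by omega)] at hM'ji
          rw [(Submodule.mem_bot k).1 hM'ji, map_zero]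
        · rw [if_neg (by omega : ¬ j ≤ i)] at hMij
          set d : ℕ := (j - i).toNat with hd
          have hdN : d < N := by omega
          have h1 : ((N:ℤ) - (j - i)).toNat = N - d := by omega
          have h2 : (j - i).toNat = d := rfl
          rw [h1] at hM'ji
          exact (hpair d (by omega)).1 _ hMij _ hM'ji
      · rw [if_neg (by omega : ¬ i ≤ j)] at hM'ji
        rw [(Submodule.mem_bot k).1 hM'ji, map_zero]
  · -- associativity
    intro M M' M'' hM hM' hM''
    set t : Finset ℤ := (coords hM.1 ∪ coords hM'.1) ∪ coords hM''.1 with ht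
    have hMco : ∀ i j, M i j ≠ 0 → i ∈ t ∧ j ∈ t := by
      intro i j h
      have := mem_coords hM.1 (p := (i, j)) h
      exact ⟨Finset.mem_union_left _ (Finset.mem_union_left _ this.1),
        Finset.mem_union_left _ (Finset.mem_union_left _ this.2)⟩
    have hM'co : ∀ i j, M' i j ≠ 0 → i ∈ t ∧ j ∈ t := by
      intro i j h
      have := mem_coords hM'.1 (p := (i, j)) h
      exact ⟨Finset.mem_union_left _ (Finset.mem_union_right _ this.1),
        Finset.mem_union_left _ (Finset.mem_union_right _ this.2)⟩
    have hM''co : ∀ i j, M'' i j ≠ 0 → i ∈ t ∧ j ∈ t := by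
      intro i j h
      have := mem_coords hM''.1 (p := (i, j)) h
      exact ⟨Finset.mem_union_right _ this.1, Finset.mem_union_right _ this.2⟩
    have hmulL : ∀ i j, matMul M M' i j = ∑ l ∈ t, M i l * M' l j := by
      intro i j
      refine finsum_eq_finset_sum_of_support_subset _ (fun l hl => ?_)
      simp only [Function.mem_support] at hl
      have : M i l ≠ 0 := fun h => hl (by rw [h, zero_mul])
      exact (hMco i l this).2
    have hmulR : ∀ l i, matMul M' M'' l i = ∑ j ∈ t, M' l j * M'' j i := by
      intro l i
      refine finsum_eq_finset_sum_of_support_subset _ (fun j hj => ?_)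
      simp only [Function.mem_support] at hj
      have : M' l j ≠ 0 := fun h => hj (by rw [h, zero_mul])
      exact (hM'co l j this).2
    unfold matForm
    have hL : ∀ i j, B (matMul M M' i j) (M'' j i) ≠ 0 → i ∈ t ∧ j ∈ t := by
      intro i j hne
      have : M'' j i ≠ 0 := fun h => hne (by rw [h, map_zero])
      exact ⟨(hM''co j i this).2, (hM''co j i this).1⟩
    have hR : ∀ i l, B (M i l) (matMul M' M'' l i) ≠ 0 → i ∈ t ∧ l ∈ t := by
      intro i l hne
      have : M i l ≠ 0 := fun h => hne (by rw [h, map_zero, LinearMap.zero_apply])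
      exact hMco i l this
    rw [finsum2_eq_sum _ t hL, finsum2_eq_sum _ t hR]
    calc (∑ i ∈ t, ∑ j ∈ t, B (matMul M M' i j) (M'' j i))
        = ∑ i ∈ t, ∑ j ∈ t, ∑ l ∈ t, B (M i l * M' l j) (M'' j i) := by
          refine Finset.sum_congr rfl (fun i _ => Finset.sum_congr rfl (fun j _ => ?_))
          rw [hmulL i j, map_sum, LinearMap.coe_sum, Finset.sum_apply]
      _ = ∑ i ∈ t, ∑ l ∈ t, ∑ j ∈ t, B (M i l) (M' l j * M'' j i) := by
          refine Finset.sum_congr rfl (fun i _ => ?_)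
          rw [Finset.sum_comm]
          exact Finset.sum_congr rfl (fun l _ => Finset.sum_congr rfl
            (fun j _ => hassoc _ _ _))
      _ = ∑ i ∈ t, ∑ l ∈ t, B (M i l) (matMul M' M'' l i) := by
          refine Finset.sum_congr rfl (fun i _ => Finset.sum_congr rfl (fun l _ => ?_))
          rw [hmulR l i, map_sum]
  · -- nondegeneracy
    intro M hM hperp
    refine ⟨hM.1, fun i j => ?_⟩
    unfold entJ
    rcases le_or_gt j (i - N) with hle | hgt
    · rw [if_pos hle]; exact Submodule.mem_top
    rw [if_neg (by omega : ¬ j ≤ i - (N:ℤ))]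
    rcases le_or_gt j i with hji | hji
    · rw [if_pos hji]
      set d : ℕ := (i - j).toNat with hd
      have hdN : d < N := by omega
      have h1 : ((N:ℤ) - (i - j)).toNat = N - d := by omega
      have h2 : N - (N - d) = d := by omega
      rw [h1]
      refine (hpair (N - d) (by omega)).2.1 _ (fun y hy => ?_)
      rw [h2] at hy
      have hyent : y ∈ entB I j i := by
        unfold entB
        rcases le_or_gt i j with h | h
        · rw [if_pos h]; exact Submodule.mem_top
        · rw [if_neg (by omega : ¬ i ≤ j)]
          have : (i - j).toNat = d := rfl
          rw [this]; exact hy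
      have := hperp (sng j i y) (sng_memB I j i y hyent)
      rwa [matForm_sng] at this
    · rw [if_neg (by omega : ¬ j ≤ i)]
      have hMij := hM.2 i j
      unfold entB at hMij
      rw [if_neg (by omega : ¬ j ≤ i)] at hMij
      set d : ℕ := (j - i).toNat with hd
      rcases le_or_gt N d with hNd | hdN
      · rw [hIN d hNd] at hMij; exact hMij
      · have h2 : N - (N - d) = d := by omega
        refine (Submodule.mem_bot k).2 ?_
        have hMd : M i j ∈ I (N - (N - d)) := by rw [h2]; exact hMij
        refine (hpair (N - d) (by omega)).2.2 _ hMd (fun a => ?_)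
        have haent : a ∈ entB I j i := by
          unfold entB; rw [if_pos (by omega : i ≤ j)]; exact Submodule.mem_top
        have := hperp (sng j i a) (sng_memB I j i a haent)
        rw [matForm_sng] at this
        rw [← this, hsymm]
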